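/- For n ≥ 1, the independence complex of the graph X_n^{(2)} = H_{1×1×n} \ N[v^1_{2n+1}] is homotopy equivalent to the sphere S^{n-1}. -/

import Mathlib

open Function Set

/-- A set of vertices of a simple graph is independent if its elements are
pairwise non-adjacent.  The independence complex `Ind G` is the simplicial
complex whose faces are exactly the independent sets. -/
def isIndepSet {V : Type*} (G : SimpleGraph V) (s : Set V) : Prop :=
  s.Pairwise fun a b => ¬ G.Adj a b

/-- Geometric realization of the subcomplex of the independence complex of `G`
consisting of the independent sets contained in `S` (so `S = univ` gives
`Ind G`, `S = {v}ᶜ` gives `Ind (G \ v)`, and `S = N[v]ᶜ` gives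
`Ind (G \ N[v])`): convex combinations of vertices whose support is a face. -/
def indRealizationIn {V : Type*} (G : SimpleGraph V) (S : Set V) : Set (V → ℝ) :=
  {f | (∀ v, 0 ≤ f v) ∧ (Function.support f).Finite ∧ Function.support f ⊆ S ∧
       isIndepSet G (Function.support f) ∧ ∑ᶠ v, f v = 1}

/-- Geometric realization of the independence complex `Ind G`. -/
def indRealization {V : Type*} (G : SimpleGraph V) : Set (V → ℝ) :=
  indRealizationIn G Set.univ

/-- The (unreduced) suspension of a topological space. -/
def Susp (X : Type*) [TopologicalSpace X] : Type _ :=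
  Quot (fun p q : X × unitInterval => (p.2 = 0 ∧ q.2 = 0) ∨ (p.2 = 1 ∧ q.2 = 1))

instance (X : Type*) [TopologicalSpace X] : TopologicalSpace (Susp X) :=
  inferInstanceAs (TopologicalSpace (Quot _))

/-- The wedge of two pointed topological spaces. -/
def WedgeAt (X Y : Type*) [TopologicalSpace X] [TopologicalSpace Y] (x₀ : X) (y₀ : Y) :
    Type _ :=
  Quot (fun p q : X ⊕ Y => p = Sum.inl x₀ ∧ q = Sum.inr y₀)

instance (X Y : Type*) [TopologicalSpace X] [TopologicalSpace Y] (x₀ : X) (y₀ : Y) :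
    TopologicalSpace (WedgeAt X Y x₀ y₀) :=
  inferInstanceAs (TopologicalSpace (Quot _))

/-- The sphere `S^{m-1}`, realized as the unit sphere of `ℝ^m`. -/
def sphere' (m : ℕ) : Set (EuclideanSpace ℝ (Fin m)) := Metric.sphere 0 1

/-- A wedge of two `m`-dimensional spheres: the two unit spheres of `ℝ^{m+1}`
centered at `±e₀`, which are tangent at the origin. -/
def sphereWedge (m : ℕ) : Set (EuclideanSpace ℝ (Fin (m + 1))) :=
  {x | dist x (EuclideanSpace.single (0 : Fin (m + 1)) (1 : ℝ)) = 1 ∨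
       dist x (-(EuclideanSpace.single (0 : Fin (m + 1)) (1 : ℝ))) = 1}

/-- The hexagonal line tiling graph `H_{1×1×n}`: two rows (row `j` carries the
vertices `v^{j+1}_1, …, v^{j+1}_{2n+1}`, column `i : Fin (2n+1)` being the
1-indexed vertex `v^{j+1}_{i+1}`), each row forming a path, together with the
rung edges `{v^1_{2t-1}, v^2_{2t-1}}`, i.e. rungs at even 0-indexed columns. -/
def hexRow (n : ℕ) : SimpleGraph (Fin 2 × Fin (2 * n + 1)) :=
  SimpleGraph.fromRel (fun p q =>
    (p.1 = q.1 ∧ (p.2 : ℕ) + 1 = (q.2 : ℕ)) ∨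
    (p.1 ≠ q.1 ∧ p.2 = q.2 ∧ (p.2 : ℕ) % 2 = 0))

/-- The last vertex `v^1_{2n+1}` of the top row of `H_{1×1×n}`. -/
def hexTop (n : ℕ) : Fin 2 × Fin (2 * n + 1) := (0, ⟨2 * n, by omega⟩)

/-- `X_n^{(1)} = H_{1×1×n} \ {v^1_{2n+1}}` : realization of its independence
complex, as the subcomplex of `Ind (H_{1×1×n})` of faces avoiding `v^1_{2n+1}`. -/
def Xn1 (n : ℕ) : Set (Fin 2 × Fin (2 * n + 1) → ℝ) :=
  indRealizationIn (hexRow n) ({hexTop n}ᶜ)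

/-- `X_n^{(2)} = H_{1×1×n} \ N[v^1_{2n+1}]` : realization of its independence
complex, as the subcomplex of `Ind (H_{1×1×n})` of faces avoiding `N[v^1_{2n+1}]`. -/
def Xn2 (n : ℕ) : Set (Fin 2 × Fin (2 * n + 1) → ℝ) :=
  indRealizationIn (hexRow n) ((insert (hexTop n) ((hexRow n).neighborSet (hexTop n)))ᶜ)

/-!
Fold lemma: if every neighbour of `u` is a neighbour of `w`, sliding the weight of `w` onto `u`
deformation retracts `Ind(G)` onto `Ind(G \ w)`. Peeling the hexagons off from the right, each
round folds away the other two neighbours of the stem of a pendant edge, which isolates that edge;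
after `n` rounds `X_n^{(2)}` has become a perfect matching on `n` edges. The independence complex
of `n` disjoint edges is the boundary of the `n`-dimensional cross-polytope (a point records, for
each edge, which end carries weight and how much), and radial projection maps it onto `S^{n-1}`.
-/

open scoped ContinuousMap

section Fold

variable {V : Type*} {G : SimpleGraph V} {S : Set V}

lemma indRealizationIn_mono {S' : Set V} (h : S ⊆ S') :
    indRealizationIn G S ⊆ indRealizationIn G S' :=
  fun _ ⟨h₁, h₂, h₃, h₄, h₅⟩ => ⟨h₁, h₂, h₃.trans h, h₄, h₅⟩

variable [DecidableEq V]

def shiftWeight (u w : V) (t : ℝ) (x : V → ℝ) : V → ℝ :=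
  x + ((1 - t) * x w) • (Pi.single u 1 - Pi.single w 1)

variable {u w : V} {t : ℝ} {x : V → ℝ}

@[simp]
lemma shiftWeight_one : shiftWeight u w 1 x = x := by
  simp [shiftWeight]

lemma shiftWeight_of_eq_zero (hxw : x w = 0) : shiftWeight u w t x = x := by
  simp [shiftWeight, hxw]

lemma shiftWeight_apply_left (huw : u ≠ w) : shiftWeight u w t x u = x u + (1 - t) * x w := by
  simp [shiftWeight, huw]

lemma shiftWeight_apply_right (huw : u ≠ w) : shiftWeight u w t x w = t * x w := by
  simp [shiftWeight, huw.symm]; ring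

lemma shiftWeight_apply_of_ne {p : V} (hpu : p ≠ u) (hpw : p ≠ w) :
    shiftWeight u w t x p = x p := by
  simp [shiftWeight, hpu, hpw]

lemma support_shiftWeight_subset : support (shiftWeight u w t x) ⊆ insert u (support x) := by
  intro p hp
  by_contra h
  simp only [mem_insert_iff, mem_support, not_or, not_not] at h
  obtain ⟨hpu, hxp⟩ := h
  by_cases hpw : p = w
  · subst hpw
    exact hp (by rw [shiftWeight_apply_right (Ne.symm hpu), hxp, mul_zero])
  · exact hp (by rw [shiftWeight_apply_of_ne hpu hpw, hxp])

lemma continuous_shiftWeight :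
    Continuous fun p : ℝ × (V → ℝ) => shiftWeight u w p.1 p.2 := by
  unfold shiftWeight
  fun_prop

variable [Fintype V]

lemma sum_shiftWeight : ∑ p, shiftWeight u w t x p = ∑ p, x p := by
  simp [shiftWeight, Finset.sum_add_distrib, ← Finset.mul_sum, Finset.sum_sub_distrib]

lemma shiftWeight_mem (hu : u ∈ S) (huw : u ≠ w) (hdom : ∀ y ∈ S, G.Adj u y → G.Adj w y)
    (hx : x ∈ indRealizationIn G S) (ht₀ : 0 ≤ t) (ht₁ : t ≤ 1) :
    shiftWeight u w t x ∈ indRealizationIn G S := by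
  obtain ⟨hpos, -, hsub, hind, hsum⟩ := hx
  by_cases hxw : x w = 0
  · rw [shiftWeight_of_eq_zero hxw]
    exact ⟨hpos, toFinite _, hsub, hind, hsum⟩
  -- `u` is independent of `supp x` because `w ∈ supp x` and `N(u) ⊆ N(w)` on `S`
  have hind' : isIndepSet G (insert u (support x)) := by
    refine pairwise_insert.2 ⟨hind, fun y hy _ => ?_⟩
    have huy : ¬ G.Adj u y := fun huy =>
      hind hxw hy (fun h => G.irrefl (h ▸ hdom y (hsub hy) huy)) (hdom y (hsub hy) huy)
    exact ⟨huy, fun h => huy h.symm⟩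
  refine ⟨fun p => ?_, toFinite _, support_shiftWeight_subset.trans (insert_subset hu hsub),
    hind'.mono support_shiftWeight_subset, ?_⟩
  · by_cases hpu : p = u
    · subst hpu
      rw [shiftWeight_apply_left huw]
      exact add_nonneg (hpos p) (mul_nonneg (by linarith) (hpos w))
    by_cases hpw : p = w
    · subst hpw
      rw [shiftWeight_apply_right huw]
      exact mul_nonneg ht₀ (hpos p)
    rw [shiftWeight_apply_of_ne hpu hpw]
    exact hpos p
  · rwa [finsum_eq_sum_of_fintype, sum_shiftWeight, ← finsum_eq_sum_of_fintype]

lemma shiftWeight_zero_mem_diff (hu : u ∈ S) (huw : u ≠ w)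
    (hdom : ∀ y ∈ S, G.Adj u y → G.Adj w y) (hx : x ∈ indRealizationIn G S) :
    shiftWeight u w 0 x ∈ indRealizationIn G (S \ {w}) := by
  obtain ⟨hpos, hfin, hsub, hind, hsum⟩ := shiftWeight_mem hu huw hdom hx le_rfl zero_le_one
  refine ⟨hpos, hfin, fun p hp => ⟨hsub hp, fun hpw => hp ?_⟩, hind, hsum⟩
  rw [mem_singleton_iff.1 hpw, shiftWeight_apply_right huw, zero_mul]

noncomputable def indRealizationIn.foldHomotopyEquiv (hu : u ∈ S) (huw : u ≠ w)
    (hdom : ∀ y ∈ S, G.Adj u y → G.Adj w y) :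
    indRealizationIn G S ≃ₕ indRealizationIn G (S \ {w}) where
  toFun := ⟨fun x => ⟨shiftWeight u w 0 x, shiftWeight_zero_mem_diff hu huw hdom x.2⟩,
    (continuous_shiftWeight.comp (continuous_const.prodMk continuous_subtype_val)).subtype_mk _⟩
  invFun := ContinuousMap.inclusion (indRealizationIn_mono sdiff_subset)
  left_inv := ⟨{
    toFun q := ⟨shiftWeight u w q.1 q.2, shiftWeight_mem hu huw hdom q.2.2 q.1.2.1 q.1.2.2⟩
    continuous_toFun := (continuous_shiftWeight.comp
      (continuous_subtype_val.prodMap continuous_subtype_val)).subtype_mk _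
    map_zero_left := fun _ => rfl
    map_one_left := fun _ => Subtype.ext shiftWeight_one }⟩
  right_inv := by
    convert ContinuousMap.Homotopic.refl _
    ext x : 2
    exact (shiftWeight_of_eq_zero (by_contra fun h => (x.2.2.2.1 h).2 rfl)).symm

noncomputable def indRealizationIn.leafHomotopyEquiv (hu : u ∈ S) (huw : u ≠ w)
    {v : V} (hleaf : ∀ y ∈ S, G.Adj u y → y = v) (hvw : G.Adj v w) :
    indRealizationIn G S ≃ₕ indRealizationIn G (S \ {w}) :=
  indRealizationIn.foldHomotopyEquiv hu huw fun y hy huy => hleaf y hy huy ▸ hvw.symm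

end Fold

section RadialProjection

variable {E : Type*} [NormedAddCommGroup E] [NormedSpace ℝ E] {N : E → ℝ}

lemma ne_zero_of_mem_level_one (hsmul : ∀ c : ℝ, 0 ≤ c → ∀ y, N (c • y) = c * N y)
    {y : E} (hy : N y = 1) : y ≠ 0 := by
  rintro rfl
  have h := hsmul 0 le_rfl 0
  rw [zero_smul, zero_mul] at h
  exact one_ne_zero (hy.symm.trans h)

noncomputable def levelOneHomeomorphUnitSphere (hN : Continuous N) (hpos : ∀ y ≠ 0, 0 < N y)
    (hsmul : ∀ c : ℝ, 0 ≤ c → ∀ y, N (c • y) = c * N y) :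
    {y | N y = 1} ≃ₜ Metric.sphere (0 : E) 1 where
  toFun y := ⟨‖(y : E)‖⁻¹ • (y : E), by
    simp [norm_smul, norm_ne_zero_iff.2 (ne_zero_of_mem_level_one hsmul y.2)]⟩
  invFun z := ⟨(N z)⁻¹ • (z : E), by
    have hz : (z : E) ≠ 0 := ne_zero_of_mem_sphere one_ne_zero z
    simp [hsmul _ (inv_nonneg.2 (hpos _ hz).le), (hpos _ hz).ne']⟩
  left_inv y := by
    have hy : N y = 1 := y.2
    have hy₀ := norm_pos_iff.2 (ne_zero_of_mem_level_one hsmul hy)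
    ext1
    simp [hsmul _ (inv_nonneg.2 hy₀.le), hy, smul_smul, hy₀.ne']
  right_inv z := by
    have hz := hpos _ (ne_zero_of_mem_sphere one_ne_zero z)
    ext1
    simp [norm_smul, abs_of_pos hz, smul_smul, hz.ne']
  continuous_toFun := by
    refine Continuous.subtype_mk (Continuous.smul ?_ continuous_subtype_val) _
    exact (continuous_subtype_val.norm).inv₀ fun y =>
      norm_ne_zero_iff.2 (ne_zero_of_mem_level_one hsmul y.2)
  continuous_invFun := by
    refine Continuous.subtype_mk (Continuous.smul ?_ continuous_subtype_val) _
    exact (hN.comp continuous_subtype_val).inv₀ fun z =>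
      (hpos _ (ne_zero_of_mem_sphere one_ne_zero z)).ne'

end RadialProjection

def crossPolytopeBoundary (n : ℕ) : Set (EuclideanSpace ℝ (Fin n)) := {y | ∑ m, |y m| = 1}

noncomputable def crossPolytopeBoundaryHomeomorphSphere (n : ℕ) :
    crossPolytopeBoundary n ≃ₜ sphere' n :=
  levelOneHomeomorphUnitSphere (by fun_prop)
    (fun y hy => by
      obtain ⟨m, hm⟩ : ∃ m, y m ≠ 0 := by
        by_contra! h
        exact hy (by ext m; exact h m)
      exact Finset.sum_pos' (fun m _ => abs_nonneg _) ⟨m, Finset.mem_univ m, abs_pos.2 hm⟩)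
    (fun c hc y => by simp [abs_mul, abs_of_nonneg hc, Finset.mul_sum])

section PerfectMatching

variable {V : Type*} {G : SimpleGraph V} {n : ℕ} {e : Fin n × Fin 2 → V}

def edgeDifference (e : Fin n × Fin 2 → V) (f : V → ℝ) : EuclideanSpace ℝ (Fin n) :=
  WithLp.toLp 2 fun m => f (e (m, 0)) - f (e (m, 1))

lemma continuous_edgeDifference : Continuous (edgeDifference (V := V) e) :=
  (PiLp.continuous_toLp 2 _).comp (by fun_prop)

noncomputable def signSplit (y : EuclideanSpace ℝ (Fin n)) (e : Fin n × Fin 2 → V) :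
    V → ℝ :=
  extend e (fun a => max (if a.2 = 0 then y a.1 else -y a.1) 0) 0

lemma eq_zero_or_eq_zero_of_mem (hedge : ∀ m, G.Adj (e (m, 0)) (e (m, 1)))
    {f : V → ℝ} (hf : f ∈ indRealizationIn G (range e)) (m : Fin n) :
    f (e (m, 0)) = 0 ∨ f (e (m, 1)) = 0 := by
  by_contra! h
  exact hf.2.2.2.1 h.1 h.2 (hedge m).ne (hedge m)

lemma abs_edgeDifference (hedge : ∀ m, G.Adj (e (m, 0)) (e (m, 1)))
    {f : V → ℝ} (hf : f ∈ indRealizationIn G (range e)) (m : Fin n) :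
    |edgeDifference e f m| = f (e (m, 0)) + f (e (m, 1)) := by
  rcases eq_zero_or_eq_zero_of_mem hedge hf m with h | h <;>
    simp [edgeDifference, h, abs_of_nonneg (hf.1 _)]

lemma signSplit_apply (he : Injective e) (y : EuclideanSpace ℝ (Fin n)) (m : Fin n)
    (d : Fin 2) :
    signSplit y e (e (m, d)) = max (if d = 0 then y m else -y m) 0 :=
  he.extend_apply _ _ _

lemma signSplit_apply_of_notMem {y : EuclideanSpace ℝ (Fin n)} {p : V} (hp : p ∉ range e) :
    signSplit y e p = 0 :=
  extend_apply' _ _ _ hp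

lemma support_signSplit_subset (y : EuclideanSpace ℝ (Fin n)) :
    support (signSplit y e) ⊆ range e :=
  fun _ hp => by_contra fun h => hp (signSplit_apply_of_notMem h)

lemma edgeDifference_signSplit (he : Injective e) (y : EuclideanSpace ℝ (Fin n)) :
    edgeDifference e (signSplit y e) = y := by
  ext m
  simp [edgeDifference, signSplit_apply he, max_zero_sub_max_neg_zero_eq_self]

lemma signSplit_edgeDifference (he : Injective e) (hedge : ∀ m, G.Adj (e (m, 0)) (e (m, 1)))
    {f : V → ℝ} (hf : f ∈ indRealizationIn G (range e)) :
    signSplit (edgeDifference e f) e = f := by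
  funext p
  by_cases hp : p ∈ range e
  · obtain ⟨⟨m, d⟩, rfl⟩ := hp
    have h₀ := hf.1 (e (m, 0))
    have h₁ := hf.1 (e (m, 1))
    rw [signSplit_apply he]
    rcases eq_zero_or_eq_zero_of_mem hedge hf m with h | h <;>
      fin_cases d <;> simp [edgeDifference, h, h₀, h₁]
  · rw [signSplit_apply_of_notMem hp]
    exact (notMem_support.1 fun h => hp (hf.2.2.1 h)).symm

variable [Fintype V]

lemma sum_eq_sum_edges (he : Injective e) {f : V → ℝ} (hf : support f ⊆ range e) :
    ∑ p, f p = ∑ m, (f (e (m, 0)) + f (e (m, 1))) := by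
  rw [← Fintype.sum_of_injective e he (f ∘ e) f (fun p hp => notMem_support.1 (hp ∘ @hf p))
    (fun _ => rfl), Fintype.sum_prod_type]
  simp

lemma edgeDifference_mem (he : Injective e) (hedge : ∀ m, G.Adj (e (m, 0)) (e (m, 1)))
    {f : V → ℝ} (hf : f ∈ indRealizationIn G (range e)) :
    edgeDifference e f ∈ crossPolytopeBoundary n := by
  change ∑ m, |edgeDifference e f m| = 1
  simp only [abs_edgeDifference hedge hf]
  rw [← sum_eq_sum_edges he hf.2.2.1, ← finsum_eq_sum_of_fintype, hf.2.2.2.2]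

lemma signSplit_mem (he : Injective e) (hsep : ∀ a b, G.Adj (e a) (e b) → a.1 = b.1)
    {y : EuclideanSpace ℝ (Fin n)} (hy : y ∈ crossPolytopeBoundary n) :
    signSplit y e ∈ indRealizationIn G (range e) := by
  refine ⟨fun p => ?_, toFinite _, support_signSplit_subset y, ?_, ?_⟩
  · by_cases hp : p ∈ range e
    · obtain ⟨⟨m, d⟩, rfl⟩ := hp
      rw [signSplit_apply he]
      exact le_max_right _ _
    · rw [signSplit_apply_of_notMem hp]
  · rintro _ hp _ hq hpq hadj
    obtain ⟨⟨m, d⟩, rfl⟩ := support_signSplit_subset y hp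
    obtain ⟨⟨m', d'⟩, rfl⟩ := support_signSplit_subset y hq
    obtain rfl : m = m' := hsep _ _ hadj
    rw [mem_support, signSplit_apply he] at hp hq
    fin_cases d <;> fin_cases d' <;> simp_all <;> linarith
  · rw [finsum_eq_sum_of_fintype, sum_eq_sum_edges he (support_signSplit_subset y)]
    have hy : ∑ m, |y m| = 1 := hy
    simpa [signSplit_apply he, max_zero_add_max_neg_zero_eq_abs_self] using hy

/-- Here `e` enumerates the ends of the edges of a perfect matching that is an induced subgraph
of `G` with vertex set `range e`. -/
noncomputable def indRealizationIn_range_homeomorphCrossPolytopeBoundary (he : Injective e)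
    (hedge : ∀ m, G.Adj (e (m, 0)) (e (m, 1))) (hsep : ∀ a b, G.Adj (e a) (e b) → a.1 = b.1) :
    indRealizationIn G (range e) ≃ₜ crossPolytopeBoundary n where
  toFun f := ⟨edgeDifference e f, edgeDifference_mem he hedge f.2⟩
  invFun y := ⟨signSplit y e, signSplit_mem he hsep y.2⟩
  left_inv f := Subtype.ext (signSplit_edgeDifference he hedge f.2)
  right_inv y := Subtype.ext (edgeDifference_signSplit he y)
  continuous_toFun :=
    (continuous_edgeDifference.comp continuous_subtype_val).subtype_mk _
  continuous_invFun := by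
    refine Continuous.subtype_mk (continuous_pi fun p => ?_) _
    by_cases hp : p ∈ range e
    · obtain ⟨⟨m, d⟩, rfl⟩ := hp
      simp only [signSplit_apply he]
      fin_cases d <;> simp only [Fin.zero_eta, Fin.mk_one, if_pos, one_ne_zero, if_false] <;>
        fun_prop
    · simp only [signSplit_apply_of_notMem hp]
      exact continuous_const

end PerfectMatching

lemma hexRow_adj {n : ℕ} {p q : Fin 2 × Fin (2 * n + 1)} :
    (hexRow n).Adj p q ↔
      ((p.1 : ℕ) = q.1 ∧ ((p.2 : ℕ) + 1 = q.2 ∨ (q.2 : ℕ) + 1 = p.2)) ∨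
       ((p.1 : ℕ) ≠ q.1 ∧ (p.2 : ℕ) = q.2 ∧ (p.2 : ℕ) % 2 = 0) := by
  obtain ⟨⟨j, hj⟩, ⟨c, hc⟩⟩ := p
  obtain ⟨⟨j', hj'⟩, ⟨c', hc'⟩⟩ := q
  simp only [hexRow, SimpleGraph.fromRel_adj, ne_eq, Prod.ext_iff, Fin.ext_iff]
  omega

section HexFolding

variable {n k : ℕ}

def hexMatching (n : ℕ) (a : Fin n × Fin 2) : Fin 2 × Fin (2 * n + 1) :=
  (⟨(n - a.1) % 2, by omega⟩, ⟨2 * a.1 + a.2, by omega⟩)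

/-- The vertex set after `k` rounds of folding: the columns left of `2(n - k) - 1`, the vertex
of column `2(n - k) - 1` in row `k + 1 mod 2`, and the last `k` edges of `hexMatching n`. -/
def foldStage (n k : ℕ) : Set (Fin 2 × Fin (2 * n + 1)) :=
  {p | (p.2 : ℕ) + 1 < 2 * (n - k) ∨
       (p.1 : ℕ) = (k + 1) % 2 ∧ (p.2 : ℕ) + 1 = 2 * (n - k) ∨
       2 * (n - k) ≤ p.2 ∧ (p.2 : ℕ) < 2 * n ∧ (p.1 : ℕ) = (n - (p.2 : ℕ) / 2) % 2}

def foldLeaf (n k : ℕ) : Fin 2 × Fin (2 * n + 1) :=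
  (⟨(k + 1) % 2, by omega⟩, ⟨2 * (n - k) - 1, by omega⟩)

def foldStem (n k : ℕ) : Fin 2 × Fin (2 * n + 1) :=
  (⟨(k + 1) % 2, by omega⟩, ⟨2 * (n - k) - 2, by omega⟩)

def foldRemoved (n k : ℕ) (i : Fin 2) : Fin 2 × Fin (2 * n + 1) :=
  (⟨(k + i) % 2, by omega⟩, ⟨2 * (n - k) - 2 - i, by omega⟩)

lemma compl_closedNbhd_hexTop :
    (insert (hexTop n) ((hexRow n).neighborSet (hexTop n)))ᶜ = foldStage n 0 := by
  ext ⟨⟨j, hj⟩, ⟨c, hc⟩⟩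
  simp only [foldStage, hexTop, mem_compl_iff, mem_insert_iff, SimpleGraph.mem_neighborSet,
    hexRow_adj, mem_ofPred_eq, Prod.ext_iff, Fin.ext_iff]
  omega

lemma foldStage_self : foldStage n n = range (hexMatching n) := by
  ext ⟨⟨j, hj⟩, ⟨c, hc⟩⟩
  simp only [foldStage, hexMatching, mem_ofPred_eq, mem_range, Prod.ext_iff, Fin.ext_iff,
    Prod.exists, Fin.exists_iff]
  constructor
  · rintro (h | h | h)
    · omega
    · omega
    · exact ⟨c / 2, by omega, c % 2, by omega, by omega, by omega⟩
  · rintro ⟨m, hm, d, hd, rfl, rfl⟩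
    omega

lemma hexMatching_injective : Injective (hexMatching n) := by
  rintro ⟨⟨m, hm⟩, ⟨d, hd⟩⟩ ⟨⟨m', hm'⟩, ⟨d', hd'⟩⟩ h
  simp only [hexMatching, Prod.ext_iff, Fin.ext_iff] at h ⊢
  omega

lemma hexRow_adj_hexMatching (m : Fin n) :
    (hexRow n).Adj (hexMatching n (m, 0)) (hexMatching n (m, 1)) := by
  simp [hexRow_adj, hexMatching]

lemma fst_eq_of_hexRow_adj_hexMatching {a b : Fin n × Fin 2}
    (h : (hexRow n).Adj (hexMatching n a) (hexMatching n b)) : a.1 = b.1 := by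
  obtain ⟨⟨m, hm⟩, ⟨d, hd⟩⟩ := a
  obtain ⟨⟨m', hm'⟩, ⟨d', hd'⟩⟩ := b
  simp only [hexRow_adj, hexMatching, Fin.ext_iff] at h ⊢
  omega

lemma eq_foldStem_of_adj_foldLeaf (hk : k < n) {y : Fin 2 × Fin (2 * n + 1)}
    (hy : y ∈ foldStage n k) (hadj : (hexRow n).Adj (foldLeaf n k) y) : y = foldStem n k := by
  obtain ⟨⟨j, hj⟩, ⟨c, hc⟩⟩ := y
  simp only [foldStage, mem_ofPred_eq] at hy
  simp only [foldLeaf, foldStem, hexRow_adj, Prod.ext_iff, Fin.ext_iff] at hadj ⊢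
  omega

lemma foldLeaf_ne_foldRemoved (hk : k < n) (i : Fin 2) : foldLeaf n k ≠ foldRemoved n k i := by
  simp only [foldLeaf, foldRemoved, ne_eq, Prod.ext_iff, Fin.ext_iff]
  omega

lemma hexRow_adj_foldStem_foldRemoved {i : Fin 2} (hi : k + i < n) :
    (hexRow n).Adj (foldStem n k) (foldRemoved n k i) := by
  simp only [foldStem, foldRemoved, hexRow_adj]
  omega

lemma foldLeaf_mem_foldStage_diff (hk : k < n) :
    foldLeaf n k ∈ foldStage n k \ {foldRemoved n k 0} := by
  simp only [foldStage, foldLeaf, foldRemoved, mem_sdiff, mem_ofPred_eq, mem_singleton_iff,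
    Prod.ext_iff, Fin.ext_iff, Fin.val_zero, true_and]
  omega

lemma foldStage_diff_foldRemoved_diff_foldRemoved (hk : k + 1 < n) :
    (foldStage n k \ {foldRemoved n k 0}) \ {foldRemoved n k 1} = foldStage n (k + 1) := by
  ext ⟨⟨j, hj⟩, ⟨c, hc⟩⟩
  simp only [foldStage, foldRemoved, mem_sdiff, mem_ofPred_eq, mem_singleton_iff, Prod.ext_iff,
    Fin.ext_iff]
  omega

lemma foldStage_diff_foldRemoved (hk : k + 1 = n) :
    foldStage n k \ {foldRemoved n k 0} = foldStage n (k + 1) := by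
  ext ⟨⟨j, hj⟩, ⟨c, hc⟩⟩
  simp only [foldStage, foldRemoved, mem_sdiff, mem_ofPred_eq, mem_singleton_iff, Prod.ext_iff,
    Fin.ext_iff]
  omega

/-- In `G[foldStage n k]`, `foldLeaf n k` is a leaf hanging from `foldStem n k`; folding away
the other neighbours `foldRemoved n k i` of the stem isolates the edge between them, which is the
next edge of the matching. -/
lemma nonempty_foldStage_homotopyEquiv_succ (hk : k < n) :
    Nonempty (indRealizationIn (hexRow n) (foldStage n k) ≃ₕ
      indRealizationIn (hexRow n) (foldStage n (k + 1))) := by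
  have hmem := foldLeaf_mem_foldStage_diff hk
  have e₀ := indRealizationIn.leafHomotopyEquiv hmem.1 (foldLeaf_ne_foldRemoved hk 0)
    (fun _ hy => eq_foldStem_of_adj_foldLeaf hk hy) (hexRow_adj_foldStem_foldRemoved hk)
  by_cases hk' : k + 1 < n
  · have e₁ := indRealizationIn.leafHomotopyEquiv hmem (foldLeaf_ne_foldRemoved hk 1)
      (fun _ hy => eq_foldStem_of_adj_foldLeaf hk hy.1) (hexRow_adj_foldStem_foldRemoved hk')
    rw [foldStage_diff_foldRemoved_diff_foldRemoved hk'] at e₁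
    exact ⟨e₀.trans e₁⟩
  · rw [foldStage_diff_foldRemoved (by omega)] at e₀
    exact ⟨e₀⟩

lemma nonempty_foldStage_zero_homotopyEquiv (hk : k ≤ n) :
    Nonempty (indRealizationIn (hexRow n) (foldStage n 0) ≃ₕ
      indRealizationIn (hexRow n) (foldStage n k)) := by
  induction k with
  | zero => exact ⟨.refl _⟩
  | succ k ih =>
    obtain ⟨e₀⟩ := ih (by omega)
    obtain ⟨e₁⟩ := nonempty_foldStage_homotopyEquiv_succ (n := n) (k := k) (by omega)
    exact ⟨e₀.trans e₁⟩

end HexFolding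

theorem ind_Xn2_general (n : ℕ) :
    Nonempty (ContinuousMap.HomotopyEquiv (↥(Xn2 n)) (↥(sphere' n))) := by
  obtain ⟨e⟩ := nonempty_foldStage_zero_homotopyEquiv (n := n) le_rfl
  rw [← compl_closedNbhd_hexTop, foldStage_self] at e
  have hmatch := indRealizationIn_range_homeomorphCrossPolytopeBoundary
    (hexMatching_injective (n := n)) hexRow_adj_hexMatching
    fun _ _ => fst_eq_of_hexRow_adj_hexMatching
  exact ⟨e.trans (hmatch.trans (crossPolytopeBoundaryHomeomorphSphere n)).toHomotopyEquiv⟩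

/-- for `n ≥ 1`, `Ind (X_n^{(2)}) ≃ S^{n-1}`, where
`X_n^{(2)} = H_{1×1×n} \ N[v^1_{2n+1}]`. -/
theorem ind_Xn2 (n : ℕ) (hn : 1 ≤ n) :
    Nonempty (ContinuousMap.HomotopyEquiv (↥(Xn2 n)) (↥(sphere' n))) :=
  ind_Xn2_general n
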